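/- Let {𝓗,Γ₀,Γ₁} be a unitary boundary triple for A* with γ-field γ, A₀ = ker Γ₀ and H(λ) as in the context. Then for every λ ∈ ℂ∖ℝ: the operator γ(conj λ) is densely defined in 𝓗, and Γ₁∘H(λ) = γ(conj λ)* (equality of single-valued operators from ran(A₀−λ) ⊆ 𝔥 into 𝓗; in particular dom γ(conj λ)* = ran(A₀−λ)). Consequently, Γ₁∘H(λ) is a bounded operator for one (equivalently all) λ ∈ ℂ∖ℝ — equivalently, the restriction of Γ₁ to A₀ is a bounded operator — if and only if A₀ is a closed relation. -/

import Mathlib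

noncomputable section

open Filter Topology

namespace BT

local notation "⟪" x ", " y "⟫" => @inner ℂ _ _ x y

section Ops
variable {α β γ' : Type*}

def domR (T : Set (α × β)) : Set α := {x | ∃ y, (x, y) ∈ T}
def ranR (T : Set (α × β)) : Set β := {y | ∃ x, (x, y) ∈ T}
def kerR [Zero β] (T : Set (α × β)) : Set α := {x | (x, (0 : β)) ∈ T}
def mulR [Zero α] (T : Set (α × β)) : Set β := {y | ((0 : α), y) ∈ T}
def invR (T : Set (α × β)) : Set (β × α) := {p | (p.2, p.1) ∈ T}
def compR (T₂ : Set (β × γ')) (T₁ : Set (α × β)) : Set (α × γ') :=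
  {p | ∃ y, (p.1, y) ∈ T₁ ∧ (y, p.2) ∈ T₂}
def csum [Add α] [Add β] (T₁ T₂ : Set (α × β)) : Set (α × β) :=
  {p | ∃ q ∈ T₁, ∃ r ∈ T₂, p = (q.1 + r.1, q.2 + r.2)}

def IsLinRel {M : Type*} [AddCommGroup M] [Module ℂ M] (s : Set M) : Prop :=
  ∃ p : Submodule ℂ M, (p : Set M) = s

def IsBddRel [Norm α] [Norm β] (T : Set (α × β)) : Prop :=
  ∃ C : ℝ, ∀ p ∈ T, ‖p.2‖ ≤ C * ‖p.1‖

def BddInv [NormedAddCommGroup α] (T : Set (α × α)) : Prop :=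
  (∀ v, ∃ p ∈ T, p.2 = v) ∧ (∀ p ∈ T, ∀ q ∈ T, p.2 = q.2 → p.1 = q.1) ∧
    ∃ C : ℝ, ∀ p ∈ T, ‖p.1‖ ≤ C * ‖p.2‖
end Ops

section Shifts
variable {α : Type*} [AddCommGroup α] [Module ℂ α]

def shiftSub (T : Set (α × α)) (l : ℂ) : Set (α × α) :=
  {p | ∃ q ∈ T, p = (q.1, q.2 - l • q.1)}
def shiftAdd (T : Set (α × α)) (l : ℂ) : Set (α × α) :=
  {p | ∃ q ∈ T, p = (q.1, q.2 + l • q.1)}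
def hatN (T : Set (α × α)) (l : ℂ) : Set (α × α) := {p ∈ T | p.2 = l • p.1}
def Nlam (T : Set (α × α)) (l : ℂ) : Set α := {f | (f, l • f) ∈ T}
def Hrel (A0s : Set (α × α)) (l : ℂ) : Set (α × (α × α)) :=
  {q | q.2 ∈ A0s ∧ q.2.2 - l • q.2.1 = q.1}
end Shifts

section InnerDefs
variable {E F : Type*} [NormedAddCommGroup E] [InnerProductSpace ℂ E]
  [NormedAddCommGroup F] [InnerProductSpace ℂ F]

def adjR (S : Set (F × E)) : Set (E × F) :=
  {p | ∀ q ∈ S, ⟪p.1, q.2⟫ = ⟪p.2, q.1⟫}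

def IsClosedSymRel (A : Set (E × E)) : Prop :=
  IsLinRel A ∧ IsClosed A ∧ A ⊆ adjR A

def kIP (p q : E × E) : ℂ := -Complex.I * ⟪q.1, p.2⟫ + Complex.I * ⟪q.2, p.1⟫

def kreinOrth (S : Set (E × E)) : Set (E × E) := {v | ∀ u ∈ S, kIP u v = 0}

def GreenPair (Γ : Set ((E × E) × (F × F))) : Prop :=
  ∀ p ∈ Γ, ∀ q ∈ Γ,
    ⟪q.1.1, p.1.2⟫ - ⟪q.1.2, p.1.1⟫ = ⟪q.2.1, p.2.2⟫ - ⟪q.2.2, p.2.1⟫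

def G0 (Γ : Set ((E × E) × (F × F))) : Set ((E × E) × F) := {p | ∃ h', (p.1, (p.2, h')) ∈ Γ}
def G1 (Γ : Set ((E × E) × (F × F))) : Set ((E × E) × F) := {p | ∃ h, (p.1, (h, p.2)) ∈ Γ}
def A0 (Γ : Set ((E × E) × (F × F))) : Set (E × E) := kerR (G0 Γ)
def A1 (Γ : Set ((E × E) × (F × F))) : Set (E × E) := kerR (G1 Γ)
def weyl (Γ : Set ((E × E) × (F × F))) (l : ℂ) : Set (F × F) :=
  {p | ∃ f : E, ((f, l • f), p) ∈ Γ}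
def gfield (Γ : Set ((E × E) × (F × F))) (l : ℂ) : Set (F × E) :=
  {p | ∃ h', ((p.2, l • p.2), (p.1, h')) ∈ Γ}

def kreinAdj (Γ : Set ((E × E) × (F × F))) : Set ((F × F) × (E × E)) :=
  {q | ∀ p ∈ Γ, kIP p.1 q.2 = kIP p.2 q.1}

def IsIsomPair (A : Set (E × E)) (Γ : Set ((E × E) × (F × F))) : Prop :=
  IsLinRel Γ ∧ domR Γ ⊆ adjR A ∧ GreenPair Γ
def IsDomDense (A : Set (E × E)) (Γ : Set ((E × E) × (F × F))) : Prop :=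
  closure (domR Γ) = adjR A
def IsABPair (A : Set (E × E)) (Γ : Set ((E × E) × (F × F))) : Prop :=
  IsIsomPair A Γ ∧ IsDomDense A Γ ∧ Dense (ranR (G0 Γ)) ∧ A0 Γ = adjR (A0 Γ)
def IsBPair (A : Set (E × E)) (Γ : Set ((E × E) × (F × F))) : Prop :=
  IsABPair A Γ ∧ ranR (G0 Γ) = Set.univ
def IsUnitaryPair (A : Set (E × E)) (Γ : Set ((E × E) × (F × F))) : Prop :=
  GreenPair Γ ∧ domR Γ ⊆ adjR A ∧ IsDomDense A Γ ∧ invR Γ = kreinAdj Γ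
def IsUnitaryBT (A : Set (E × E)) (Γ : Set ((E × E) × (F × F))) : Prop :=
  IsUnitaryPair A Γ ∧ mulR Γ = {0}
def IsOrdinaryBT (A : Set (E × E)) (Γ : Set ((E × E) × (F × F))) : Prop :=
  IsIsomPair A Γ ∧ mulR Γ = {0} ∧ domR Γ = adjR A ∧ ranR Γ = Set.univ

def Erel (Γ : Set ((E × E) × (F × F))) (m : ℂ) : Set (F × F) :=
  {p | ∃ u' v', (p.1, u') ∈ weyl Γ m ∧ (p.1, v') ∈ weyl Γ ((starRingEnd ℂ) m) ∧
        p.2 = (2 : ℂ)⁻¹ • (u' + v')}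

def triTransform (Γ : Set ((E × E) × (F × F))) (e : Set (F × F)) :
    Set ((E × E) × (F × F)) :=
  {q | ∃ h h' w, (q.1, (h, h')) ∈ Γ ∧ (h, w) ∈ e ∧ q.2 = (h, w + h')}

def formVal (l : ℂ) (u u' : F) : ℝ :=
  ((l - (starRingEnd ℂ) l)⁻¹ * (⟪u, u'⟫ - ⟪u', u⟫)).re

def FormClosable (l : ℂ) (Ms : Set (F × F)) : Prop :=
  ∀ u u' : ℕ → F, (∀ n, (u n, u' n) ∈ Ms) →
    Tendsto u atTop (nhds (0 : F)) →
    Tendsto (fun nm : ℕ × ℕ => formVal l (u nm.1 - u nm.2) (u' nm.1 - u' nm.2)) atTop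
      (nhds (0 : ℝ)) →
    Tendsto (fun n => formVal l (u n) (u' n)) atTop (nhds (0 : ℝ))

def formClosureDom (l : ℂ) (Ms : Set (F × F)) : Set F :=
  {v | ∃ u u' : ℕ → F, (∀ n, (u n, u' n) ∈ Ms) ∧ Tendsto u atTop (nhds v) ∧
    Tendsto (fun nm : ℕ × ℕ => formVal l (u nm.1 - u nm.2) (u' nm.1 - u' nm.2)) atTop
      (nhds (0 : ℝ))}

end InnerDefs

section CompleteDefs
variable {F : Type*} [NormedAddCommGroup F] [InnerProductSpace ℂ F] [CompleteSpace F]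

def IsNevFun (M₀ : ℂ → F →L[ℂ] F) : Prop :=
  DifferentiableOn ℂ M₀ {l : ℂ | l.im ≠ 0} ∧
  (∀ l : ℂ, l.im ≠ 0 → M₀ ((starRingEnd ℂ) l) = ContinuousLinearMap.adjoint (M₀ l)) ∧
  (∀ l : ℂ, 0 < l.im → ∀ u, 0 ≤ (⟪u, M₀ l u⟫).im)

def ImOp (Tb : F →L[ℂ] F) : F →L[ℂ] F :=
  ((2 : ℂ) * Complex.I)⁻¹ • (Tb - ContinuousLinearMap.adjoint Tb)

end CompleteDefs

variable {E F : Type*} [NormedAddCommGroup E] [InnerProductSpace ℂ E] [CompleteSpace E]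
  [NormedAddCommGroup F] [InnerProductSpace ℂ F] [CompleteSpace F]

/-!
Unitarity of `Γ` says that its main transform `T` is a self-adjoint relation in `𝔥 ⊕ 𝓗`, so
`T - λ` is onto for non-real `λ`. Solving `(T - λ) z = (h, -v)` for `(h, v) ∈ γ(λ̄)*` and testing
`z` against the solutions of `(T - λ̄) q ∈ 0 ⊕ 𝓗`, which are the vectors `(γ(λ̄) u, u)`, puts
`z` in `𝔥 ⊕ 0`; this produces `((f, h + λ f), (0, v)) ∈ Γ`, i.e. `(h, v) ∈ Γ₁ ∘ H(λ)`. The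
other inclusion is Green's identity. As `A₀` is symmetric, `(f, f') ↦ f' - λ f` is bounded
above and below on `A₀`, which moves boundedness between `Γ₁ ∘ H(λ)` and `Γ₁ ↾ A₀`; and
`Γ₁ ↾ A₀` is a closed operator, so by the closed graph theorem it is bounded iff its domain
`A₀` is closed.
-/

section Relations
variable {X Y Z : Type*} [NormedAddCommGroup X] [NormedAddCommGroup Y] [NormedAddCommGroup Z]

lemma isBddRel_iff_exists_nonneg {T : Set (X × Y)} :
    IsBddRel T ↔ ∃ C, 0 ≤ C ∧ ∀ p ∈ T, ‖p.2‖ ≤ C * ‖p.1‖ :=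
  ⟨fun ⟨C, hC⟩ => ⟨max C 0, le_max_right _ _, fun p hp =>
    (hC p hp).trans (mul_le_mul_of_nonneg_right (le_max_left _ _) (norm_nonneg _))⟩,
   fun ⟨C, _, hC⟩ => ⟨C, hC⟩⟩

lemma isBddRel_image_prodMap_iff {T : Set (X × Y)} {φ : X → Z} {a c : ℝ} (hc : 0 < c)
    (hle : ∀ p ∈ T, ‖φ p.1‖ ≤ a * ‖p.1‖) (hge : ∀ p ∈ T, c * ‖p.1‖ ≤ ‖φ p.1‖) :
    IsBddRel (Prod.map φ id '' T) ↔ IsBddRel T := by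
  constructor
  · intro hbdd
    obtain ⟨C, hC0, hC⟩ := isBddRel_iff_exists_nonneg.1 hbdd
    refine ⟨C * a, fun p hp => ?_⟩
    calc ‖p.2‖ ≤ C * ‖φ p.1‖ := hC _ (Set.mem_image_of_mem _ hp)
      _ ≤ C * (a * ‖p.1‖) := mul_le_mul_of_nonneg_left (hle p hp) hC0
      _ = C * a * ‖p.1‖ := (mul_assoc _ _ _).symm
  · intro hbdd
    obtain ⟨C, hC0, hC⟩ := isBddRel_iff_exists_nonneg.1 hbdd
    refine ⟨C / c, ?_⟩
    rintro _ ⟨p, hp, rfl⟩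
    calc ‖p.2‖ ≤ C * ‖p.1‖ := hC p hp
      _ ≤ C * (‖φ p.1‖ / c) :=
        mul_le_mul_of_nonneg_left ((le_div_iff₀' hc).2 (hge p hp)) hC0
      _ = C / c * ‖φ p.1‖ := by ring

end Relations

section LinearRelations
variable {M N : Type*} [AddCommGroup M] [Module ℂ M] [AddCommGroup N] [Module ℂ N]

lemma IsLinRel.eq_of_mem {T : Set (M × N)} (hT : IsLinRel T) (hmul : mulR T ⊆ {0}) {x : M}
    {a b : N} (ha : (x, a) ∈ T) (hb : (x, b) ∈ T) : a = b := by
  obtain ⟨p, rfl⟩ := hT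
  have hab : a - b ∈ mulR (p : Set (M × N)) := by simpa [mulR] using p.sub_mem ha hb
  exact sub_eq_zero.mp (hmul hab)

lemma IsLinRel.domR {T : Set (M × N)} (hT : IsLinRel T) : IsLinRel (domR T) := by
  obtain ⟨p, rfl⟩ := hT
  exact ⟨p.map (LinearMap.fst ℂ M N), by ext; simp [BT.domR]⟩

lemma IsLinRel.preimage {s : Set N} (hs : IsLinRel s) (f : M →ₗ[ℂ] N) : IsLinRel (f ⁻¹' s) := by
  obtain ⟨p, rfl⟩ := hs
  exact ⟨p.comap f, rfl⟩

end LinearRelations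

section ClosedGraph
variable {X Y : Type*} [NormedAddCommGroup X] [NormedSpace ℂ X] [CompleteSpace X]
  [NormedAddCommGroup Y] [NormedSpace ℂ Y] [CompleteSpace Y]

/-- Both directions come from the Banach-space fact that an injective operator has closed range
iff it is bounded below, applied to `(x, y) ↦ x` on `T`. -/
theorem isBddRel_iff_isClosed_domR {T : Set (X × Y)} (hT : IsLinRel T) (hTc : IsClosed T)
    (hmul : mulR T ⊆ {0}) : IsBddRel T ↔ IsClosed (domR T) := by
  obtain ⟨Ts, rfl⟩ := hT
  have : CompleteSpace Ts := hTc.completeSpace_coe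
  let π : Ts →L[ℂ] X := (ContinuousLinearMap.fst ℂ X Y).comp Ts.subtypeL
  have hinj : Function.Injective π := by
    refine (injective_iff_map_eq_zero π).2 fun p (hp : (p : X × Y).1 = 0) => ?_
    have hmem : ((0 : X), (p : X × Y).2) ∈ Ts := by
      rw [← hp]
      exact p.2
    exact Subtype.ext (Prod.ext hp (hmul hmem))
  have hran : Set.range π = domR (Ts : Set (X × Y)) := by
    ext x
    simp [π, BT.domR]
  rw [← hran, π.isClosed_range_iff_antilipschitz_of_injective hinj,
    antilipschitzWith_iff_exists_mul_le_norm]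
  constructor
  · intro hbdd
    obtain ⟨C, hC0, hC⟩ := isBddRel_iff_exists_nonneg.1 hbdd
    refine ⟨(max C 1)⁻¹, by positivity, fun p => ?_⟩
    rw [inv_mul_le_iff₀ (by positivity)]
    refine norm_prod_le_iff.2 ⟨?_, ?_⟩
    · exact le_mul_of_one_le_left (norm_nonneg _) (le_max_right _ _)
    · exact (hC p p.2).trans (mul_le_mul_of_nonneg_right (le_max_left _ _) (norm_nonneg _))
  · rintro ⟨c, hc, hcp⟩
    refine ⟨c⁻¹, fun p hp => ?_⟩
    rw [inv_mul_eq_div, le_div_iff₀' hc]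
    exact (mul_le_mul_of_nonneg_left (norm_snd_le p) hc.le).trans (hcp ⟨p, hp⟩)

end ClosedGraph

section Adjoint
variable {X Y : Type*} [NormedAddCommGroup X] [InnerProductSpace ℂ X]
  [NormedAddCommGroup Y] [InnerProductSpace ℂ Y]

def adjSubmodule (S : Set (Y × X)) : Submodule ℂ (X × Y) where
  carrier := adjR S
  zero_mem' q _ := by simp
  add_mem' {a b} ha hb q hq := by simp [ha q hq, hb q hq]
  smul_mem' c a ha q hq := by simp [ha q hq]

lemma isClosed_adjR (S : Set (Y × X)) : IsClosed (adjR S) := by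
  simp only [adjR, Set.ofPred_forall]
  exact isClosed_biInter fun q _ => isClosed_eq (by fun_prop) (by fun_prop)

theorem dense_domR_of_mulR_adjR [CompleteSpace Y] {S : Set (Y × X)} (hS : IsLinRel (domR S))
    (hmul : mulR (adjR S) = {0}) : Dense (domR S) := by
  obtain ⟨D, hD⟩ := hS
  rw [← hD, Submodule.dense_iff_topologicalClosure_eq_top,
    Submodule.topologicalClosure_eq_top_iff, Submodule.eq_bot_iff]
  intro v hv
  have hvS : v ∈ mulR (adjR S) := fun q hq => by
    rw [inner_zero_left, eq_comm, inner_eq_zero_symm]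
    refine (Submodule.mem_orthogonal _ _).1 hv q.1 ?_
    rw [← SetLike.mem_coe, hD]
    exact ⟨q.2, hq⟩
  simpa [hmul] using hvS

end Adjoint

section Symmetric
variable {K : Type*} [NormedAddCommGroup K] [InnerProductSpace ℂ K]

lemma abs_im_mul_norm_le_norm_sub_smul {f f' : K} (hsym : ⟪f, f'⟫ = ⟪f', f⟫) (l : ℂ) :
    |l.im| * ‖f‖ ≤ ‖f' - l • f‖ := by
  have hreal : (⟪f, f'⟫).im = 0 :=
    Complex.conj_eq_iff_im.1 ((inner_conj_symm f' f).trans hsym.symm)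
  have him : (⟪f, f' - l • f⟫).im = -(l.im * ‖f‖ ^ 2) := by
    rw [inner_sub_right, inner_smul_right, inner_self_eq_norm_sq_to_K]
    simp [hreal, ← Complex.ofReal_pow]
  have hsq : |l.im| * ‖f‖ ^ 2 ≤ ‖f‖ * ‖f' - l • f‖ :=
    calc |l.im| * ‖f‖ ^ 2 = |(⟪f, f' - l • f⟫).im| := by
          rw [him, abs_neg, abs_mul, abs_of_nonneg (sq_nonneg ‖f‖)]
      _ ≤ ‖⟪f, f' - l • f⟫‖ := Complex.abs_im_le_norm _
      _ ≤ ‖f‖ * ‖f' - l • f‖ := norm_inner_le_norm _ _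
  rcases (norm_nonneg f).eq_or_lt with hf | hf
  · rw [← hf, mul_zero]
    exact norm_nonneg _
  · nlinarith

lemma exists_pos_mul_norm_le_norm_sub_smul {l : ℂ} (hl : l.im ≠ 0) :
    ∃ c > 0, ∀ p : K × K, ⟪p.1, p.2⟫ = ⟪p.2, p.1⟫ → c * ‖p‖ ≤ ‖p.2 - l • p.1‖ := by
  have him : 0 < |l.im| := abs_pos.2 hl
  refine ⟨|l.im| / (|l.im| + ‖l‖ + 1), by positivity, fun p hsym => ?_⟩
  have h1 := abs_im_mul_norm_le_norm_sub_smul hsym l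
  have h2 : ‖p.2‖ ≤ ‖p.2 - l • p.1‖ + ‖l‖ * ‖p.1‖ := by
    simpa [norm_smul] using norm_le_norm_sub_add p.2 (l • p.1)
  rw [div_mul_eq_mul_div, div_le_iff₀ (by positivity), ← le_div_iff₀' him]
  refine norm_prod_le_iff.2 ⟨?_, ?_⟩ <;> rw [le_div_iff₀' him]
  · nlinarith [norm_nonneg l, norm_nonneg (p.2 - l • p.1)]
  · nlinarith [mul_le_mul_of_nonneg_left h2 him.le, mul_le_mul_of_nonneg_left h1 (norm_nonneg l),
      norm_nonneg (p.2 - l • p.1)]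

/-- The range of `S - l` is closed since `S - l` is bounded below, and dense since
`(x, conj l • x) ∈ S* = S` for `x ⊥ ran (S - l)`. -/
theorem exists_mem_of_adjR_eq_self [CompleteSpace K] {S : Set (K × K)} (hS : adjR S = S)
    {l : ℂ} (hl : l.im ≠ 0) (x : K) : ∃ z, (z, x + l • z) ∈ S := by
  have hsym : ∀ p ∈ S, ⟪p.1, p.2⟫ = ⟪p.2, p.1⟫ := fun p hp => (by rwa [hS] : p ∈ adjR S) p hp
  have hmemS : ∀ p : adjSubmodule S, (p : K × K) ∈ S := fun p => by
    have hp : (p : K × K) ∈ adjR S := p.2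
    rwa [hS] at hp
  have : CompleteSpace (adjSubmodule S) := (isClosed_adjR S).completeSpace_coe
  let φ : adjSubmodule S →L[ℂ] K :=
    (ContinuousLinearMap.snd ℂ K K - l • ContinuousLinearMap.fst ℂ K K).comp
      (adjSubmodule S).subtypeL
  have hφ : ∃ c > 0, ∀ p, c * ‖p‖ ≤ ‖φ p‖ := by
    obtain ⟨c, hc, hbound⟩ := exists_pos_mul_norm_le_norm_sub_smul (K := K) hl
    exact ⟨c, hc, fun p => hbound p (hsym p (hmemS p))⟩
  let R : Submodule ℂ K := LinearMap.range (φ : adjSubmodule S →ₗ[ℂ] K)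
  have hclosed : IsClosed (R : Set K) := by
    obtain ⟨C, hC⟩ := antilipschitzWith_iff_exists_mul_le_norm.2 hφ
    exact hC.isClosed_range φ.uniformContinuous
  have hperp : Rᗮ = ⊥ := by
    refine (Submodule.eq_bot_iff _).2 fun y hy => ?_
    have hmem : (y, (starRingEnd ℂ) l • y) ∈ S := by
      rw [← hS]
      intro q hq
      have h0 : ⟪q.2 - l • q.1, y⟫ = 0 :=
        (Submodule.mem_orthogonal _ _).1 hy _
          (LinearMap.mem_range_self _ (⟨q, by rwa [← hS] at hq⟩ : adjSubmodule S))
      rw [inner_sub_left, inner_smul_left, sub_eq_zero] at h0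
      rw [inner_smul_left, Complex.conj_conj, ← inner_conj_symm, h0, ← inner_conj_symm y]
      simp
    have h := abs_im_mul_norm_le_norm_sub_smul (hsym _ hmem) ((starRingEnd ℂ) l)
    rw [sub_self, norm_zero, Complex.conj_im, abs_neg] at h
    exact norm_le_zero_iff.1 (nonpos_of_mul_nonpos_right h (abs_pos.2 hl))
  have htop : R = ⊤ := by
    rw [← hclosed.submodule_topologicalClosure_eq]
    exact Submodule.topologicalClosure_eq_top_iff.2 hperp
  obtain ⟨p, hp⟩ : x ∈ R := by
    rw [htop]
    exact Submodule.mem_top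
  refine ⟨(p : K × K).1, ?_⟩
  rw [← hp]
  simpa [φ] using hmemS p

end Symmetric

section Restriction
variable {𝔥 𝓗 : Type*} [AddCommGroup 𝔥] [Module ℂ 𝔥] [NormedAddCommGroup 𝓗]
  {Γ : Set ((𝔥 × 𝔥) × (𝓗 × 𝓗))}

def G1onA0 (Γ : Set ((𝔥 × 𝔥) × (𝓗 × 𝓗))) : Set ((𝔥 × 𝔥) × 𝓗) :=
  {q | (q.1, ((0 : 𝓗), q.2)) ∈ Γ}

/-- `Γ₁ ∘ H(l)`, written through `Γ₁ ↾ A₀` since `H(l)` inverts `(f, f') ↦ f' - l • f` on `A₀`. -/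
def G1compH (Γ : Set ((𝔥 × 𝔥) × (𝓗 × 𝓗))) (l : ℂ) : Set (𝔥 × 𝓗) :=
  Prod.map (fun y : 𝔥 × 𝔥 => y.2 - l • y.1) id '' G1onA0 Γ

lemma domR_G1compH (l : ℂ) : domR (G1compH Γ l) = ranR (shiftSub (A0 Γ) l) := by
  ext h
  constructor
  · rintro ⟨_, ⟨y, v⟩, hy, heq⟩
    exact ⟨y.1, y, ⟨v, hy⟩, Prod.ext rfl (Prod.ext_iff.1 heq).1.symm⟩
  · rintro ⟨_, y, ⟨h', hy⟩, heq⟩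
    exact ⟨h', (y, h'), hy, Prod.ext (Prod.ext_iff.1 heq).2.symm rfl⟩

end Restriction

section UnitaryRelation
variable {𝔥 𝓗 : Type*} [NormedAddCommGroup 𝔥] [InnerProductSpace ℂ 𝔥]
  [NormedAddCommGroup 𝓗] [InnerProductSpace ℂ 𝓗] {Γ : Set ((𝔥 × 𝔥) × (𝓗 × 𝓗))}

lemma isLinRel_invR_kreinAdj (S : Set ((𝔥 × 𝔥) × (𝓗 × 𝓗))) : IsLinRel (invR (kreinAdj S)) := by
  refine ⟨{ carrier := invR (kreinAdj S), add_mem' := ?_, zero_mem' := ?_, smul_mem' := ?_ }, rfl⟩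
  · intro a b ha hb p hp
    have h1 := ha p hp
    have h2 := hb p hp
    simp only [kIP, Prod.fst_add, Prod.snd_add, inner_add_left] at h1 h2 ⊢
    linear_combination h1 + h2
  · intro p _
    simp [kIP]
  · intro c a ha p hp
    have h1 := ha p hp
    simp only [kIP, Prod.smul_fst, Prod.smul_snd, inner_smul_left] at h1 ⊢
    linear_combination (starRingEnd ℂ c) * h1

lemma isClosed_invR_kreinAdj (S : Set ((𝔥 × 𝔥) × (𝓗 × 𝓗))) : IsClosed (invR (kreinAdj S)) := by
  have hK : kreinAdj S = ⋂ p ∈ S, {q | kIP p.1 q.2 = kIP p.2 q.1} := by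
    ext
    simp [kreinAdj]
  refine (hK ▸ isClosed_biInter fun p _ => isClosed_eq ?_ ?_).preimage continuous_swap <;>
    simp only [kIP] <;> fun_prop

lemma invR_kreinAdj_eq (hKA : invR Γ = kreinAdj Γ) : invR (kreinAdj Γ) = Γ := by
  rw [← hKA]
  rfl

lemma isLinRel_of_invR_eq_kreinAdj (hKA : invR Γ = kreinAdj Γ) : IsLinRel Γ :=
  invR_kreinAdj_eq hKA ▸ isLinRel_invR_kreinAdj Γ

lemma isClosed_of_invR_eq_kreinAdj (hKA : invR Γ = kreinAdj Γ) : IsClosed Γ :=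
  invR_kreinAdj_eq hKA ▸ isClosed_invR_kreinAdj Γ

lemma isLinRel_gfield (hΓ : IsLinRel Γ) (μ : ℂ) : IsLinRel (gfield Γ μ) := by
  obtain ⟨p, rfl⟩ := hΓ
  refine ⟨{ carrier := gfield p μ, add_mem' := ?_, zero_mem' := ⟨0, ?_⟩, smul_mem' := ?_ }, rfl⟩
  · rintro a b ⟨ha, hA⟩ ⟨hb, hB⟩
    exact ⟨ha + hb, by simpa [smul_add] using p.add_mem hA hB⟩
  · simp only [Prod.fst_zero, Prod.snd_zero, smul_zero, Prod.mk_zero_zero]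
    exact p.zero_mem
  · rintro c a ⟨ha, hA⟩
    exact ⟨c • ha, by simpa [smul_comm c μ] using p.smul_mem c hA⟩

lemma inner_fst_snd_of_mem_A0 (hGreen : GreenPair Γ) {y : 𝔥 × 𝔥} (hy : y ∈ A0 Γ) :
    ⟪y.1, y.2⟫ = ⟪y.2, y.1⟫ := by
  obtain ⟨h', hΓ⟩ := hy
  have h := hGreen _ hΓ _ hΓ
  simp only [inner_zero_left, inner_zero_right, sub_zero] at h
  exact sub_eq_zero.1 h

/-- The main transform of `Γ`; unitarity of `Γ` is self-adjointness of this relation. -/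
def mainTransform (Γ : Set ((𝔥 × 𝔥) × (𝓗 × 𝓗))) :
    Set (WithLp 2 (𝔥 × 𝓗) × WithLp 2 (𝔥 × 𝓗)) :=
  {q | ((q.1.fst, q.2.fst), (q.1.snd, -q.2.snd)) ∈ Γ}

lemma adjR_mainTransform (hKA : invR Γ = kreinAdj Γ) :
    adjR (mainTransform Γ) = mainTransform Γ := by
  have hmem : ∀ r, r ∈ Γ ↔ ∀ s ∈ Γ, kIP s.1 r.1 = kIP s.2 r.2 := fun r =>
    Iff.of_eq (congrArg (r ∈ ·) (invR_kreinAdj_eq hKA)).symm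
  have key : ∀ q z : WithLp 2 (𝔥 × 𝓗) × WithLp 2 (𝔥 × 𝓗),
      kIP (q.1.fst, q.2.fst) (z.1.fst, z.2.fst) - kIP (q.1.snd, -q.2.snd) (z.1.snd, -z.2.snd)
        = -Complex.I * (⟪z.1, q.2⟫ - ⟪z.2, q.1⟫) := fun q z => by
    simp only [kIP, WithLp.prod_inner_apply, WithLp.ofLp_fst, WithLp.ofLp_snd, inner_neg_left,
      inner_neg_right]
    ring
  ext z
  refine Iff.trans ?_ (hmem ((z.1.fst, z.2.fst), (z.1.snd, -z.2.snd))).symm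
  constructor
  · intro h s hs
    let q : WithLp 2 (𝔥 × 𝓗) × WithLp 2 (𝔥 × 𝓗) :=
      (WithLp.toLp 2 (s.1.1, s.2.1), WithLp.toLp 2 (s.1.2, -s.2.2))
    have hq := key q z
    rw [h q (by simpa [mainTransform, q] using hs), sub_self, mul_zero, sub_eq_zero] at hq
    simpa [q] using hq
  · intro h q hq
    have hq' := key q z
    rw [h _ hq, sub_self, zero_eq_mul] at hq'
    exact sub_eq_zero.1 (hq'.resolve_left (by simp))

lemma exists_mem_of_mem_adjR_gfield [CompleteSpace 𝔥] [CompleteSpace 𝓗]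
    (hKA : invR Γ = kreinAdj Γ) {l : ℂ} (hl : l.im ≠ 0) {h : 𝔥} {v : 𝓗}
    (hhv : (h, v) ∈ adjR (gfield Γ ((starRingEnd ℂ) l))) :
    ∃ f : 𝔥, ((f, h + l • f), ((0 : 𝓗), v)) ∈ Γ := by
  have hT := adjR_mainTransform hKA
  obtain ⟨z, hz⟩ := exists_mem_of_adjR_eq_self hT hl (WithLp.toLp 2 (h, -v))
  suffices hz2 : z.snd = 0 by
    refine ⟨z.fst, ?_⟩
    simpa [mainTransform, hz2] using hz
  refine ext_inner_right ℂ fun y => ?_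
  obtain ⟨q, hq⟩ := exists_mem_of_adjR_eq_self hT (l := (starRingEnd ℂ) l) (by simpa using hl)
    (WithLp.toLp 2 (0, y))
  have hγ : (q.snd, q.fst) ∈ gfield Γ ((starRingEnd ℂ) l) :=
    ⟨-(y + (starRingEnd ℂ) l • q.snd), by simpa [mainTransform] using hq⟩
  have hpair : ⟪z, _⟫ = ⟪_, q⟫ := (hT ▸ hz : _ ∈ adjR (mainTransform Γ)) _ hq
  have hadj : ⟪h, q.fst⟫ = ⟪v, q.snd⟫ := hhv _ hγ
  simp only [inner_add_left, inner_add_right, inner_smul_left, inner_smul_right,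
    WithLp.prod_inner_apply, WithLp.ofLp_fst, WithLp.ofLp_snd,
    inner_zero_right, inner_neg_left, zero_add] at hpair
  rw [inner_zero_left]
  linear_combination hpair + hadj

lemma sep_G1_mem_A0_eq (hΓ : IsLinRel Γ) (hmul : mulR Γ = {0}) :
    {q ∈ G1 Γ | q.1 ∈ A0 Γ} = G1onA0 Γ := by
  ext ⟨y, v⟩
  constructor
  · rintro ⟨⟨w, hw⟩, h', hh'⟩
    have hw0 : w = 0 := congrArg Prod.fst (hΓ.eq_of_mem hmul.subset hw hh')
    subst hw0
    exact hw
  · intro hy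
    exact ⟨⟨0, hy⟩, v, hy⟩

lemma compR_G1_Hrel_eq (hΓ : IsLinRel Γ) (hmul : mulR Γ = {0}) (l : ℂ) :
    compR (G1 Γ) (Hrel (A0 Γ) l) = G1compH Γ l := by
  rw [G1compH, ← sep_G1_mem_A0_eq hΓ hmul]
  ext ⟨h, v⟩
  constructor
  · rintro ⟨y, ⟨hyA0, hy⟩, hyv⟩
    exact ⟨(y, v), ⟨hyv, hyA0⟩, Prod.ext hy rfl⟩
  · rintro ⟨⟨y, w⟩, ⟨hyw, hyA0⟩, heq⟩
    obtain ⟨hy, hw⟩ := Prod.ext_iff.1 heq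
    exact ⟨y, ⟨hyA0, hy⟩, hw ▸ hyw⟩

theorem G1compH_eq_adjR_gfield [CompleteSpace 𝔥] [CompleteSpace 𝓗] (hGreen : GreenPair Γ)
    (hKA : invR Γ = kreinAdj Γ) {l : ℂ} (hl : l.im ≠ 0) :
    G1compH Γ l = adjR (gfield Γ ((starRingEnd ℂ) l)) := by
  apply Set.Subset.antisymm
  · rintro _ ⟨⟨y, v⟩, hy, rfl⟩ ⟨u, g⟩ ⟨h', hγ⟩
    have hG := hGreen _ hγ _ hy
    simp only [inner_smul_right, inner_zero_left] at hG
    simp only [Prod.map_fst, Prod.map_snd, id, inner_sub_left, inner_smul_left]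
    linear_combination -hG
  · rintro ⟨h, v⟩ hhv
    obtain ⟨f, hf⟩ := exists_mem_of_mem_adjR_gfield hKA hl hhv
    exact ⟨((f, h + l • f), v), hf, by simp⟩

lemma mulR_G1compH (hGreen : GreenPair Γ) (hΓ : IsLinRel Γ) (hmul : mulR Γ = {0}) {l : ℂ}
    (hl : l.im ≠ 0) : mulR (G1compH Γ l) = {0} := by
  obtain ⟨c, hc, hbound⟩ := exists_pos_mul_norm_le_norm_sub_smul (K := 𝔥) hl
  ext v
  constructor
  · rintro ⟨⟨y, w⟩, hy, heq⟩
    obtain ⟨hy0, rfl⟩ := Prod.ext_iff.1 heq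
    have hy_zero : y = 0 := by
      have h := hbound y (inner_fst_snd_of_mem_A0 hGreen ⟨_, hy⟩)
      rw [show y.2 - l • y.1 = 0 from hy0, norm_zero] at h
      exact norm_le_zero_iff.1 (nonpos_of_mul_nonpos_right h hc)
    subst hy_zero
    have hw : ((0 : 𝓗), w) ∈ mulR Γ := hy
    simpa [hmul] using hw
  · rintro rfl
    obtain ⟨p, hp⟩ := hΓ
    have h0 : (0 : (𝔥 × 𝔥) × (𝓗 × 𝓗)) ∈ Γ := hp ▸ p.zero_mem
    exact ⟨0, h0, Prod.ext (by simp) rfl⟩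

lemma isBddRel_G1compH_iff (hGreen : GreenPair Γ) {l : ℂ} (hl : l.im ≠ 0) :
    IsBddRel (G1compH Γ l) ↔ IsBddRel (G1onA0 Γ) := by
  obtain ⟨c, hc, hbound⟩ := exists_pos_mul_norm_le_norm_sub_smul (K := 𝔥) hl
  refine isBddRel_image_prodMap_iff (a := 1 + ‖l‖) hc (fun p _ => ?_)
    fun p hp => hbound p.1 (inner_fst_snd_of_mem_A0 hGreen ⟨_, hp⟩)
  calc ‖p.1.2 - l • p.1.1‖ ≤ ‖p.1.2‖ + ‖l‖ * ‖p.1.1‖ := by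
        simpa [norm_smul] using norm_sub_le p.1.2 (l • p.1.1)
    _ ≤ ‖p.1‖ + ‖l‖ * ‖p.1‖ := by gcongr; exacts [norm_snd_le _, norm_fst_le _]
    _ = (1 + ‖l‖) * ‖p.1‖ := by ring

lemma isBddRel_G1onA0_iff_isClosed_A0 [CompleteSpace 𝔥] [CompleteSpace 𝓗]
    (hKA : invR Γ = kreinAdj Γ) (hmul : mulR Γ = {0}) :
    IsBddRel (G1onA0 Γ) ↔ IsClosed (A0 Γ) := by
  let L : (𝔥 × 𝔥) × 𝓗 →L[ℂ] (𝔥 × 𝔥) × (𝓗 × 𝓗) :=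
    (ContinuousLinearMap.fst ℂ _ _).prod
      ((ContinuousLinearMap.inr ℂ 𝓗 𝓗).comp (ContinuousLinearMap.snd ℂ _ _))
  have hL : G1onA0 Γ = L ⁻¹' Γ := rfl
  refine isBddRel_iff_isClosed_domR
    (hL ▸ (isLinRel_of_invR_eq_kreinAdj hKA).preimage L.toLinearMap)
    (hL ▸ (isClosed_of_invR_eq_kreinAdj hKA).preimage L.continuous) fun v hv => ?_
  have hv' : ((0 : 𝓗), v) ∈ mulR Γ := hv
  simpa [hmul] using hv'

end UnitaryRelation

theorem statement14_general (A : Set (E × E)) (Γ : Set ((E × E) × (F × F)))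
    (hU : IsUnitaryBT A Γ) :
    (∀ l : ℂ, l.im ≠ 0 →
       Dense (domR (gfield Γ ((starRingEnd ℂ) l))) ∧
       compR (G1 Γ) (Hrel (A0 Γ) l) = adjR (gfield Γ ((starRingEnd ℂ) l)) ∧
       mulR (adjR (gfield Γ ((starRingEnd ℂ) l))) = {(0 : F)} ∧
       domR (adjR (gfield Γ ((starRingEnd ℂ) l))) = ranR (shiftSub (A0 Γ) l)) ∧
    ((∃ l : ℂ, l.im ≠ 0 ∧ IsBddRel (compR (G1 Γ) (Hrel (A0 Γ) l))) ↔
       (∀ l : ℂ, l.im ≠ 0 → IsBddRel (compR (G1 Γ) (Hrel (A0 Γ) l)))) ∧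
    ((∃ l : ℂ, l.im ≠ 0 ∧ IsBddRel (compR (G1 Γ) (Hrel (A0 Γ) l))) ↔
       IsBddRel {q ∈ G1 Γ | q.1 ∈ A0 Γ}) ∧
    (IsBddRel {q ∈ G1 Γ | q.1 ∈ A0 Γ} ↔ IsClosed (A0 Γ)) := by
  obtain ⟨⟨hGreen, -, -, hKA⟩, hmul⟩ := hU
  have hΓ := isLinRel_of_invR_eq_kreinAdj hKA
  have hbdd : ∀ l : ℂ, l.im ≠ 0 →
      (IsBddRel (compR (G1 Γ) (Hrel (A0 Γ) l)) ↔ IsBddRel {q ∈ G1 Γ | q.1 ∈ A0 Γ}) :=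
    fun l hl => by
      rw [compR_G1_Hrel_eq hΓ hmul, sep_G1_mem_A0_eq hΓ hmul]
      exact isBddRel_G1compH_iff hGreen hl
  have hI : Complex.I.im ≠ 0 := by simp
  refine ⟨fun l hl => ?_, ⟨fun ⟨l, hl, h⟩ l' hl' => (hbdd l' hl').2 ((hbdd l hl).1 h),
    fun h => ⟨_, hI, h _ hI⟩⟩, ⟨fun ⟨l, hl, h⟩ => (hbdd l hl).1 h,
    fun h => ⟨_, hI, (hbdd _ hI).2 h⟩⟩, ?_⟩
  · have hadj := G1compH_eq_adjR_gfield hGreen hKA hl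
    have hmulR : mulR (adjR (gfield Γ ((starRingEnd ℂ) l))) = {0} :=
      hadj ▸ mulR_G1compH hGreen hΓ hmul hl
    refine ⟨dense_domR_of_mulR_adjR (isLinRel_gfield hΓ _).domR hmulR,
      (compR_G1_Hrel_eq hΓ hmul l).trans hadj, hmulR, ?_⟩
    rw [← hadj, domR_G1compH]
  · rw [sep_G1_mem_A0_eq hΓ hmul]
    exact isBddRel_G1onA0_iff_isClosed_A0 hKA hmul

/-- for a unitary boundary triple, `Γ₁ ∘ H(λ) = γ(conj λ)*` with
`dom γ(conj λ)* = ran (A₀ − λ)`, and boundedness of `Γ₁ ∘ H(λ)` (equivalently of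
`Γ₁` restricted to `A₀`) is equivalent to closedness of `A₀`. -/
theorem statement14 (A : Set (E × E)) (Γ : Set ((E × E) × (F × F)))
    (hA : IsClosedSymRel A) (hU : IsUnitaryBT A Γ) :
    (∀ l : ℂ, l.im ≠ 0 →
       Dense (domR (gfield Γ ((starRingEnd ℂ) l))) ∧
       compR (G1 Γ) (Hrel (A0 Γ) l) = adjR (gfield Γ ((starRingEnd ℂ) l)) ∧
       mulR (adjR (gfield Γ ((starRingEnd ℂ) l))) = {(0 : F)} ∧
       domR (adjR (gfield Γ ((starRingEnd ℂ) l))) = ranR (shiftSub (A0 Γ) l)) ∧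
    ((∃ l : ℂ, l.im ≠ 0 ∧ IsBddRel (compR (G1 Γ) (Hrel (A0 Γ) l))) ↔
       (∀ l : ℂ, l.im ≠ 0 → IsBddRel (compR (G1 Γ) (Hrel (A0 Γ) l)))) ∧
    ((∃ l : ℂ, l.im ≠ 0 ∧ IsBddRel (compR (G1 Γ) (Hrel (A0 Γ) l))) ↔
       IsBddRel {q ∈ G1 Γ | q.1 ∈ A0 Γ}) ∧
    (IsBddRel {q ∈ G1 Γ | q.1 ∈ A0 Γ} ↔ IsClosed (A0 Γ)) :=
  statement14_general A Γ hU

end BT
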